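/- arXiv:1102.0980 — 3 statements merged into one kernel-verified Lean document; each statement's English description precedes it below -/
import Mathlib

section
/- For every ℓ ≥ 1, every finite type α, and every word ω : Fin ℓ → α, the number of bridges of G_ω (counted as ordered pairs (a, b) ∈ α × α) equals the number of disjoint splits of ω (indices j with 1 ≤ j < ℓ such that the prefix and suffix alphabets at j are disjoint). -/
/-- The edge relation of the word-graph of `ω`: ordered pairs of distinct adjacent letters. -/
def WordEdge {ℓ : ℕ} {α : Type*} (ω : Fin ℓ → α) (a b : α) : Prop :=
  a ≠ b ∧ ∃ i : ℕ, ∃ h : i + 1 < ℓ, ω ⟨i, Nat.lt_of_succ_lt h⟩ = a ∧ ω ⟨i + 1, h⟩ = b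

/-- `(a, b)` is a bridge of the word-graph of `ω`: a unidirectional edge whose removal
disconnects (in the weak sense) the word-graph on the alphabet `Set.range ω`. -/
def IsBridge {ℓ : ℕ} {α : Type*} (ω : Fin ℓ → α) (a b : α) : Prop :=
  WordEdge ω a b ∧ ¬ WordEdge ω b a ∧
    ∃ c ∈ Set.range ω, ∃ d ∈ Set.range ω,
      ¬ Relation.ReflTransGen
        (fun x y => (WordEdge ω x y ∧ ¬(x = a ∧ y = b)) ∨
                    (WordEdge ω y x ∧ ¬(y = a ∧ x = b))) c d

/-- `j` is a disjoint split of `ω`: `1 ≤ j < ℓ` and the prefix alphabet and suffix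
alphabet at `j` are disjoint. -/
def DisjointSplit {ℓ : ℕ} {α : Type*} (ω : Fin ℓ → α) (j : ℕ) : Prop :=
  1 ≤ j ∧ j < ℓ ∧
    Disjoint {a | ∃ i : Fin ℓ, (i : ℕ) < j ∧ ω i = a}
             {a | ∃ i : Fin ℓ, j ≤ (i : ℕ) ∧ ω i = a}

/-!
Removing the edge `(ω (j-1), ω j)` at a disjoint split `j` leaves every remaining edge inside
the prefix alphabet or inside the suffix alphabet, so the edge is a bridge. Conversely, let
`(a, b)` be a bridge occurring at position `m`, and let `C` be the component of `a` once the
edge is deleted. Reading `ω` from left to right, membership in `C` can only change at an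
occurrence of `a b`, where it is lost; as `b ∉ C`, the letters in `C` are exactly those at
positions `≤ m`, and `m + 1` is a disjoint split. The letter `ω j` occurs nowhere before a
disjoint split `j`, so `j ↦ (ω (j-1), ω j)` is injective.
-/

open Relation

theorem Fin.antitone_of_forall_succ_le {ℓ : ℕ} {β : Type*} [Preorder β] {f : Fin ℓ → β}
    (hf : ∀ m (hm : m + 1 < ℓ), f ⟨m + 1, hm⟩ ≤ f ⟨m, Nat.lt_of_succ_lt hm⟩) : Antitone f := by
  cases ℓ with
  | zero => exact fun i => i.elim0
  | succ n => exact Fin.antitone_iff_succ_le.2 fun i => hf i (Nat.succ_lt_succ i.2)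

section WordGraph

variable {ℓ : ℕ} {α : Type*} (ω : Fin ℓ → α)

/-- `IsBridge ω a b` is stated for `SymmGen (ResidualEdge ω a b)`, unfolded. -/
def ResidualEdge (a b x y : α) : Prop :=
  WordEdge ω x y ∧ ¬(x = a ∧ y = b)

/-- Reading `ω`, one enters or leaves `C` only across occurrences of the factor `a b`. -/
def IsCrossedOnlyBy (a b : α) (C : Set α) : Prop :=
  ∀ m (hm : m + 1 < ℓ), ¬(ω ⟨m, Nat.lt_of_succ_lt hm⟩ = a ∧ ω ⟨m + 1, hm⟩ = b) →
    (ω ⟨m, Nat.lt_of_succ_lt hm⟩ ∈ C ↔ ω ⟨m + 1, hm⟩ ∈ C)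

variable {ω}

theorem IsCrossedOnlyBy.mem_iff_of_reflTransGen {a b x y : α} {C : Set α}
    (hC : IsCrossedOnlyBy ω a b C) (hxy : ReflTransGen (SymmGen (ResidualEdge ω a b)) x y) :
    x ∈ C ↔ y ∈ C := by
  induction hxy with
  | refl => rfl
  | tail _ hyz ih =>
    rcases hyz with ⟨⟨-, m, hm, rfl, rfl⟩, hab⟩ | ⟨⟨-, m, hm, rfl, rfl⟩, hab⟩
    · exact ih.trans (hC m hm hab)
    · exact ih.trans (hC m hm hab).symm

theorem isCrossedOnlyBy_residualComponent (a b x : α) :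
    IsCrossedOnlyBy ω a b {y | ReflTransGen (SymmGen (ResidualEdge ω a b)) x y} := by
  intro m hm hab
  have hstep : ReflTransGen (SymmGen (ResidualEdge ω a b))
      (ω ⟨m, Nat.lt_of_succ_lt hm⟩) (ω ⟨m + 1, hm⟩) := by
    by_cases heq : ω ⟨m, Nat.lt_of_succ_lt hm⟩ = ω ⟨m + 1, hm⟩
    · rw [heq]
    · exact .single (.of_rel ⟨⟨heq, m, hm, rfl, rfl⟩, hab⟩)
  exact ⟨fun h => h.trans hstep, fun h => h.trans (symm hstep)⟩

theorem IsCrossedOnlyBy.mem_iff_mem {a b : α} {C : Set α} (hC : IsCrossedOnlyBy ω a b C)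
    (hab : a ∈ C ↔ b ∈ C) (i k : Fin ℓ) : ω i ∈ C ↔ ω k ∈ C := by
  have hsucc : ∀ m (hm : m + 1 < ℓ), ω ⟨m, Nat.lt_of_succ_lt hm⟩ ∈ C ↔ ω ⟨m + 1, hm⟩ ∈ C := by
    intro m hm
    by_cases hocc : ω ⟨m, Nat.lt_of_succ_lt hm⟩ = a ∧ ω ⟨m + 1, hm⟩ = b
    · rw [hocc.1, hocc.2, hab]
    · exact hC m hm hocc
  have hmem : Antitone fun i => ω i ∈ C :=
    Fin.antitone_of_forall_succ_le fun m hm => (hsucc m hm).2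
  have hnot : Antitone fun i => ω i ∉ C :=
    Fin.antitone_of_forall_succ_le fun m hm => mt (hsucc m hm).1
  rcases le_total i k with hik | hki
  · exact ⟨fun hi => not_not.1 fun hk => hnot hik hk hi, hmem hik⟩
  · exact ⟨hmem hki, fun hk => not_not.1 fun hi => hnot hki hi hk⟩

theorem DisjointSplit.le_of_apply_eq {j : ℕ} (hs : DisjointSplit ω j) {i : Fin ℓ}
    (h : ω i = ω ⟨j, hs.2.1⟩) : j ≤ i := by
  by_contra! hij
  exact Set.disjoint_left.1 hs.2.2 ⟨i, hij, h⟩ ⟨⟨j, hs.2.1⟩, le_rfl, rfl⟩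

theorem DisjointSplit.isBridge {j : ℕ} (hs : DisjointSplit ω j) :
    IsBridge ω (ω ⟨j - 1, (j.sub_le 1).trans_lt hs.2.1⟩) (ω ⟨j, hs.2.1⟩) := by
  obtain ⟨hj, hjℓ, hdisj⟩ := hs
  set a := ω ⟨j - 1, (j.sub_le 1).trans_lt hjℓ⟩
  set b := ω ⟨j, hjℓ⟩
  have hdisj : Disjoint (ω '' {i | (i : ℕ) < j}) (ω '' {i | j ≤ (i : ℕ)}) := hdisj
  have mem_prefix {i : Fin ℓ} (hi : (i : ℕ) < j) : ω i ∈ ω '' {i | (i : ℕ) < j} :=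
    Set.mem_image_of_mem ω hi
  have not_mem_prefix {i : Fin ℓ} (hi : j ≤ (i : ℕ)) : ω i ∉ ω '' {i | (i : ℕ) < j} :=
    Set.disjoint_right.1 hdisj (Set.mem_image_of_mem ω hi)
  have ha : a ∈ ω '' {i | (i : ℕ) < j} := mem_prefix (by simp only; omega)
  have hb : b ∉ ω '' {i | (i : ℕ) < j} := not_mem_prefix le_rfl
  have hsucc : ω ⟨j - 1 + 1, by omega⟩ = b := congrArg ω (Fin.ext (by simp only; omega))
  have hC : IsCrossedOnlyBy ω a b (ω '' {i | (i : ℕ) < j}) := by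
    intro m hm hocc
    rcases lt_trichotomy (m + 1) j with hlt | heq | hgt
    · exact iff_of_true (mem_prefix (by simp only; omega)) (mem_prefix hlt)
    · subst heq
      exact absurd ⟨rfl, hsucc⟩ hocc
    · exact iff_of_false (not_mem_prefix (by simp only; omega)) (not_mem_prefix hgt.le)
  refine ⟨⟨ne_of_mem_of_not_mem ha hb, j - 1, by omega, rfl, hsucc⟩, ?_,
    a, Set.mem_range_self _, b, Set.mem_range_self _,
    fun hab => hb ((hC.mem_iff_of_reflTransGen hab).1 ha)⟩
  rintro ⟨-, m, hm, hmb, hma⟩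
  by_cases hmj : m < j
  · exact hb (hmb ▸ mem_prefix hmj)
  · exact not_mem_prefix (by simp only; omega) (hma ▸ ha)

theorem IsBridge.exists_disjointSplit {a b : α} (h : IsBridge ω a b) :
    ∃ j, ∃ hs : DisjointSplit ω j,
      ω ⟨j - 1, (j.sub_le 1).trans_lt hs.2.1⟩ = a ∧ ω ⟨j, hs.2.1⟩ = b := by
  obtain ⟨⟨-, m, hm, ha, hb⟩, -, _, ⟨c, rfl⟩, _, ⟨d, rfl⟩, hcd⟩ := h
  set C := {y | ReflTransGen (SymmGen (ResidualEdge ω a b)) a y}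
  have hC : IsCrossedOnlyBy ω a b C := isCrossedOnlyBy_residualComponent a b a
  -- if `a` and `b` were linked, nothing would cross the component of `ω c`
  have hbC : b ∉ C := fun hab => hcd <|
    ((isCrossedOnlyBy_residualComponent a b (ω c)).mem_iff_mem
      ⟨fun hca => hca.trans hab, fun hcb => hcb.trans (symm hab)⟩ c d).1 ReflTransGen.refl
  have hanti : Antitone fun i => ω i ∈ C := by
    refine Fin.antitone_of_forall_succ_le fun k hk hk1 => ?_
    by_cases hocc : ω ⟨k, Nat.lt_of_succ_lt hk⟩ = a ∧ ω ⟨k + 1, hk⟩ = b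
    · exact hocc.1 ▸ ReflTransGen.refl
    · exact (hC k hk hocc).2 hk1
  refine ⟨m + 1, ⟨by omega, hm, Set.disjoint_left.2 ?_⟩, by simpa using ha, hb⟩
  have haC : ω ⟨m, Nat.lt_of_succ_lt hm⟩ ∈ C := ha ▸ ReflTransGen.refl
  rintro _ ⟨i, hi, rfl⟩ ⟨k, hk, hki⟩
  have hiC : ω i ∈ C := hanti (b := ⟨m, Nat.lt_of_succ_lt hm⟩) (Nat.lt_succ_iff.1 hi) haC
  have hkC : ω k ∈ C := hki ▸ hiC
  exact hbC (hb ▸ hanti (a := ⟨m + 1, hm⟩) hk hkC)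

end WordGraph

theorem card_bridges_eq_card_disjointSplits_general {ℓ : ℕ} {α : Type*}
    (ω : Fin ℓ → α) :
    Nat.card {p : α × α // IsBridge ω p.1 p.2} = Nat.card {j : ℕ // DisjointSplit ω j} := by
  let edge (j : {j : ℕ // DisjointSplit ω j}) : {p : α × α // IsBridge ω p.1 p.2} :=
    ⟨(ω ⟨j - 1, (j.1.sub_le 1).trans_lt j.2.2.1⟩, ω ⟨j, j.2.2.1⟩), j.2.isBridge⟩
  refine (Nat.card_eq_of_bijective edge ⟨fun j k hjk => ?_, fun p => ?_⟩).symm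
  · have h : ω ⟨j, j.2.2.1⟩ = ω ⟨k, k.2.2.1⟩ := congrArg (fun p => p.1.2) hjk
    exact Subtype.ext (le_antisymm (j.2.le_of_apply_eq h.symm) (k.2.le_of_apply_eq h))
  · obtain ⟨j, hs, ha, hb⟩ := p.2.exists_disjointSplit
    exact ⟨⟨j, hs⟩, Subtype.ext (Prod.ext ha hb)⟩

/-- The number of bridges of a word-graph equals the number of disjoint splits of the word. -/
theorem card_bridges_eq_card_disjointSplits {ℓ : ℕ} {α : Type*} [Fintype α] (hℓ : 1 ≤ ℓ)
    (ω : Fin ℓ → α) :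
    Nat.card {p : α × α // IsBridge ω p.1 p.2} = Nat.card {j : ℕ // DisjointSplit ω j} :=
  card_bridges_eq_card_disjointSplits_general ω
end

section
/- Let ℓ ≥ 2, n ≥ 2, and let j, m be natural numbers with 0 ≤ j ≤ ℓ−2 and 0 ≤ m ≤ n−2. Suppose p is an irreducible (n−m)-partition of the set {0, 1, …, ℓ−j−2} (the first ℓ−j−1 elements of Fin ℓ), p̂ is an m-partition of the set {ℓ−j−1, …, ℓ−2}, and b is a block of p that does not contain 0. Then the collection of blocks consisting of all blocks of p̂, all blocks of p other than b, and the block b ∪ {ℓ−1}, is an irreducible n-partition of Fin ℓ. -/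
/-- An `n`-partition of `Fin ℓ` is reducible if some nonempty proper subset of its blocks
has union `{i : Fin ℓ | (i : ℕ) < j}` for some `1 ≤ j < ℓ`. -/
def Reducible {ℓ : ℕ} (P : Finpartition (Finset.univ : Finset (Fin ℓ))) : Prop :=
  ∃ j : ℕ, 1 ≤ j ∧ j < ℓ ∧ ∃ B : Finset (Finset (Fin ℓ)),
    B.Nonempty ∧ B ⊂ P.parts ∧ B.sup id = Finset.univ.filter (fun i : Fin ℓ => (i : ℕ) < j)

/-- `S ℓ n`: the number of `n`-partitions of `Fin ℓ` (Stirling number of the second kind). -/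
noncomputable def S (ℓ n : ℕ) : ℕ :=
  Nat.card {P : Finpartition (Finset.univ : Finset (Fin ℓ)) // P.parts.card = n}

/-- `I ℓ n`: the number of irreducible `n`-partitions of `Fin ℓ`. -/
noncomputable def I (ℓ n : ℕ) : ℕ :=
  Nat.card {P : Finpartition (Finset.univ : Finset (Fin ℓ)) // P.parts.card = n ∧ ¬ Reducible P}

/-! A set of blocks of the glued partition that covers an initial segment `[0, j')` with
`j' < ℓ` cannot contain the block `insert (ℓ - 1) b`, so it misses the elements of `b`; hence
`j' ≤ min b < ℓ - j - 1`. The covered segment then lies below every element of `p̂`, so no block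
of `p̂` is involved and the blocks form a nonempty proper subset of `p.parts` (it omits `b`)
covering `[0, j')`, contradicting the irreducibility of `p`. -/

namespace Finpartition

section DistribLattice

variable {α : Type*} [DistribLattice α] [OrderBot α] [DecidableEq α] {a b : α}

@[simps]
def disjUnion (P : Finpartition a) (Q : Finpartition b) (hab : Disjoint a b) :
    Finpartition (a ⊔ b) where
  parts := P.parts ∪ Q.parts
  supIndep := by
    rw [Finset.supIndep_iff_pairwiseDisjoint, Finset.coe_union, Set.pairwiseDisjoint_union]
    exact ⟨P.disjoint, Q.disjoint, fun _ hc _ hd _ ↦ hab.mono (P.le hc) (Q.le hd)⟩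
  sup_parts := by rw [Finset.sup_union, P.sup_parts, Q.sup_parts]
  bot_notMem h := (Finset.mem_union.1 h).elim P.bot_notMem Q.bot_notMem

variable (P : Finpartition a) (Q : Finpartition b) (hab : Disjoint a b)

omit [DecidableEq α] in
include hab in
theorem disjoint_parts_of_disjoint : Disjoint P.parts Q.parts :=
  Finset.disjoint_left.2 fun _ hP hQ ↦ P.ne_bot hP (disjoint_self.1 (hab.mono (P.le hP) (Q.le hQ)))

theorem card_disjUnion : (P.disjUnion Q hab).parts.card = P.parts.card + Q.parts.card :=
  Finset.card_union_of_disjoint (disjoint_parts_of_disjoint P Q hab)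

theorem subset_parts_of_subset_disjUnion {B : Finset α} (hB : B ⊆ (P.disjUnion Q hab).parts)
    (hBa : B.sup id ≤ a) : B ⊆ P.parts := fun _ hc ↦
  (Finset.mem_union.1 (hB hc)).resolve_right fun hQ ↦
    Q.ne_bot hQ (disjoint_self.1 (hab.mono ((Finset.le_sup (f := id) hc).trans hBa) (Q.le hQ)))

end DistribLattice

section Finset

variable {α : Type*} [DecidableEq α] {s b : Finset α} {a : α}

@[simps]
def insertIntoPart (P : Finpartition s) (hb : b ∈ P.parts) (ha : a ∉ s) :
    Finpartition (insert a s) where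
  parts := insert (insert a b) (P.parts.erase b)
  supIndep := by
    rw [Finset.supIndep_iff_pairwiseDisjoint, Finset.coe_insert, Set.pairwiseDisjoint_insert]
    refine ⟨P.disjoint.subset (by simp), fun c hc _ ↦ ?_⟩
    obtain ⟨hcb, hc⟩ := Finset.mem_erase.1 hc
    exact Finset.disjoint_insert_left.2
      ⟨fun hac ↦ ha (P.le hc hac), P.disjoint hb hc (Ne.symm hcb)⟩
  sup_parts := by
    rw [Finset.sup_insert, id, Finset.sup_eq_union, Finset.insert_union, ← id_eq b,
      ← Finset.sup_eq_union, ← Finset.sup_insert, id_eq, Finset.insert_erase hb, P.sup_parts]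
  bot_notMem h := (Finset.mem_insert.1 h).elim (fun h ↦ Finset.insert_ne_empty a b h.symm)
    fun h ↦ P.bot_notMem (Finset.mem_of_mem_erase h)

theorem card_insertIntoPart (P : Finpartition s) (hb : b ∈ P.parts) (ha : a ∉ s) :
    (P.insertIntoPart hb ha).parts.card = P.parts.card := by
  rw [insertIntoPart_parts, Finset.card_insert_of_notMem, Finset.card_erase_add_one hb]
  exact fun h ↦ ha (P.le (Finset.mem_of_mem_erase h) (Finset.mem_insert_self a b))

end Finset

end Finpartition

open Finset Finpartition

theorem not_reducible_copy_disjUnion_insertIntoPart {ℓ k : ℕ} {t : Finset (Fin ℓ)}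
    (p : Finpartition (univ.filter fun i : Fin ℓ => (i : ℕ) < k))
    (hpirr : ¬ ∃ j' : ℕ, 1 ≤ j' ∧ j' < k ∧ ∃ B : Finset (Finset (Fin ℓ)),
      B.Nonempty ∧ B ⊂ p.parts ∧ B.sup id = univ.filter fun i : Fin ℓ => (i : ℕ) < j')
    {b : Finset (Fin ℓ)} (hb : b ∈ p.parts) {a : Fin ℓ} (ha : (a : ℕ) = ℓ - 1)
    (has : a ∉ univ.filter fun i : Fin ℓ => (i : ℕ) < k) (Q : Finpartition t)
    (hdisj : Disjoint (insert a (univ.filter fun i : Fin ℓ => (i : ℕ) < k)) t)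
    (hcover : insert a (univ.filter fun i : Fin ℓ => (i : ℕ) < k) ⊔ t = univ) :
    ¬ Reducible (((p.insertIntoPart hb has).disjUnion Q hdisj).copy hcover) := by
  rintro ⟨j', hj'1, hj'ℓ, B, hBne, hBq, hBsup⟩
  have hnewb : insert a b ∉ B := fun h ↦ by
    have := le_sup (f := id) h (mem_insert_self a b)
    simp only [hBsup, mem_filter, mem_univ, true_and] at this
    omega
  obtain ⟨x, hx⟩ := p.nonempty_of_mem_parts hb
  have hxk : (x : ℕ) < k := by simpa using p.le hb hx
  have hj'x : j' ≤ x := by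
    have hdisjB : Disjoint (insert a b) (B.sup id) :=
      Finpartition.supIndep _ hBq.subset (by simp) hnewb
    have := disjoint_left.1 hdisjB (mem_insert_of_mem hx)
    simpa [hBsup] using this
  have hBs : B.sup id ≤ insert a (univ.filter fun i : Fin ℓ => (i : ℕ) < k) := by
    rw [hBsup]
    intro y hy
    simp only [mem_filter, mem_univ, true_and, mem_insert] at hy ⊢
    omega
  have hBp : B ⊆ p.parts.erase b := (subset_insert_iff_of_notMem hnewb).1
    (subset_parts_of_subset_disjUnion _ Q hdisj hBq.subset hBs)
  exact hpirr ⟨j', hj'1, by omega, B, hBne, hBp.trans_ssubset (erase_ssubset hb), hBsup⟩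

/-- Combining an irreducible `(n-m)`-partition `p` of `{0, …, ℓ-j-2}`, an `m`-partition
`p̂` of `{ℓ-j-1, …, ℓ-2}`, and inserting `ℓ-1` into a block `b` of `p` not containing `0`,
yields an irreducible `n`-partition of `Fin ℓ`. -/
theorem combined_partition_irreducible (ℓ n j m : ℕ) (hℓ : 2 ≤ ℓ)
    (p : Finpartition (Finset.univ.filter fun i : Fin ℓ => (i : ℕ) < ℓ - j - 1))
    (hpcard : p.parts.card = n - m)
    (hpirr : ¬ ∃ j' : ℕ, 1 ≤ j' ∧ j' < ℓ - j - 1 ∧ ∃ B : Finset (Finset (Fin ℓ)),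
      B.Nonempty ∧ B ⊂ p.parts ∧
        B.sup id = Finset.univ.filter fun i : Fin ℓ => (i : ℕ) < j')
    (phat : Finpartition
      (Finset.univ.filter fun i : Fin ℓ => ℓ - j - 1 ≤ (i : ℕ) ∧ (i : ℕ) < ℓ - 1))
    (hphatcard : phat.parts.card = m)
    (b : Finset (Fin ℓ)) (hb : b ∈ p.parts) :
    ∃ q : Finpartition (Finset.univ : Finset (Fin ℓ)),
      q.parts = phat.parts ∪ p.parts.erase b ∪ {insert (⟨ℓ - 1, by omega⟩ : Fin ℓ) b} ∧
      q.parts.card = n ∧ ¬ Reducible q := by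
  set a : Fin ℓ := ⟨ℓ - 1, by omega⟩
  have has : a ∉ univ.filter fun i : Fin ℓ => (i : ℕ) < ℓ - j - 1 := by
    simp only [mem_filter, mem_univ, true_and, not_lt, a]; omega
  have hdisj : Disjoint (insert a (univ.filter fun i : Fin ℓ => (i : ℕ) < ℓ - j - 1))
      (univ.filter fun i : Fin ℓ => ℓ - j - 1 ≤ (i : ℕ) ∧ (i : ℕ) < ℓ - 1) := by
    rw [disjoint_left]; intro x
    simp only [mem_insert, Fin.ext_iff, mem_filter, mem_univ, true_and, a]; omega
  have hcover : insert a (univ.filter fun i : Fin ℓ => (i : ℕ) < ℓ - j - 1) ⊔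
      univ.filter (fun i : Fin ℓ => ℓ - j - 1 ≤ (i : ℕ) ∧ (i : ℕ) < ℓ - 1) = univ := by
    ext x
    simp only [sup_eq_union, mem_union, mem_insert, Fin.ext_iff, mem_filter, mem_univ, true_and,
      iff_true, a]
    omega
  have hp_pos : 0 < p.parts.card := card_pos.2 ⟨b, hb⟩
  refine ⟨((p.insertIntoPart hb has).disjUnion phat hdisj).copy hcover, ?_, ?_,
    not_reducible_copy_disjUnion_insertIntoPart p hpirr hb rfl has phat hdisj hcover⟩
  · rw [copy_parts, disjUnion_parts, insertIntoPart_parts, insert_eq]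
    ac_rfl
  · rw [copy_parts, Finpartition.card_disjUnion, card_insertIntoPart]; omega
end

section
/- For all ℓ ≥ 2 and n ≥ 2, the number of irreducible n-partitions of Fin ℓ in which 0 and ℓ−1 lie in different blocks equals Σ_{j=0}^{ℓ−2} Σ_{m=0}^{n−2} S(j, m) · I(ℓ−j−1, n−m) · (n−m−1). -/
/-!
Delete the last point of an irreducible partition `q` of `Fin ℓ`. What remains splits at its
first cut `h` into an irreducible partition `Q` of `[0, h)` followed by an arbitrary partition
`P` of the next `j = ℓ - 1 - h` points. The block of `ℓ - 1` must meet `[0, h)`, since otherwise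
`h` would be a cut of `q`; so `q` is `Q` and `P` side by side with `ℓ - 1` added to a block `c`
of `Q`, and `0`, `ℓ - 1` are separated exactly when `c` is not the block of `0`. Conversely
every such triple `(Q, P, c)` glues to an irreducible partition, and when `Q` has `n - m` blocks
there are `n - m - 1` choices of `c`.
-/

open Finset

lemma Setoid.card_range_eq_of_ker_eq {α β γ : Type*} {f : α → β} {g : α → γ}
    (h : Setoid.ker f = Setoid.ker g) : Nat.card (Set.range f) = Nat.card (Set.range g) := by
  rw [← Nat.card_congr (Setoid.quotientKerEquivRange f),
    ← Nat.card_congr (Setoid.quotientKerEquivRange g), h]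

namespace Finpartition

variable {α β : Type*} [Fintype α] [DecidableEq α]

lemma parts_eq_image_part (P : Finpartition (univ : Finset α)) : P.parts = univ.image P.part := by
  ext t
  simp only [mem_image, mem_univ, true_and]
  refine ⟨fun ht => ?_, fun ⟨a, ha⟩ => ha ▸ P.part_mem.2 (mem_univ a)⟩
  obtain ⟨a, -, ha⟩ := P.part_surjOn ht
  exact ⟨a, ha⟩

lemma card_parts_eq_card_range (P : Finpartition (univ : Finset α)) :
    #P.parts = Nat.card (Set.range P.part) := by
  rw [parts_eq_image_part, ← Set.toFinset_range, Nat.card_eq_card_toFinset]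

lemma part_eq_part_iff_mem (P : Finpartition (univ : Finset α)) (a b : α) :
    P.part a = P.part b ↔ a ∈ P.part b :=
  (P.mem_part_iff_part_eq_part (mem_univ a) (mem_univ b)).symm

lemma ext_of_part_eq_part_iff {P Q : Finpartition (univ : Finset α)}
    (h : ∀ a b, P.part a = P.part b ↔ Q.part a = Q.part b) : P = Q := by
  have hpart : P.part = Q.part := funext fun a => by
    ext b
    rw [← part_eq_part_iff_mem, ← part_eq_part_iff_mem, h]
  rw [Finpartition.ext_iff, parts_eq_image_part, parts_eq_image_part, hpart]

lemma exists_mem_parts_mem_and_mem_iff (P : Finpartition (univ : Finset α)) (a b : α) :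
    (∃ t ∈ P.parts, a ∈ t ∧ b ∈ t) ↔ P.part a = P.part b := by
  rw [part_eq_part_iff_mem, mem_part_iff_exists]

variable [DecidableEq β]

def fibers (g : α → β) : Finpartition (univ : Finset α) :=
  @ofSetoid _ _ _ (Setoid.ker g) fun a b => decEq (g a) (g b)

@[simp]
lemma part_fibers_eq_part_fibers_iff (g : α → β) (a b : α) :
    (fibers g).part a = (fibers g).part b ↔ g a = g b := by
  rw [part_eq_part_iff_mem, fibers, mem_part_ofSetoid_iff_rel]
  exact eq_comm

lemma card_parts_fibers (g : α → β) : #(fibers g).parts = Nat.card (Set.range g) := by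
  rw [card_parts_eq_card_range]
  exact Setoid.card_range_eq_of_ker_eq (Setoid.ext fun a b => part_fibers_eq_part_fibers_iff g a b)

def comap [Fintype β] (P : Finpartition (univ : Finset α)) (f : β → α) :
    Finpartition (univ : Finset β) :=
  fibers (P.part ∘ f)

@[simp]
lemma part_comap_eq_part_comap_iff [Fintype β] (P : Finpartition (univ : Finset α)) (f : β → α)
    (a b : β) : (P.comap f).part a = (P.comap f).part b ↔ P.part (f a) = P.part (f b) :=
  part_fibers_eq_part_fibers_iff _ a b

end Finpartition

open Finpartition

section Cut

variable {L : ℕ}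

def IsCut (q : Finpartition (univ : Finset (Fin L))) (j : ℕ) : Prop :=
  ∀ x y, q.part x = q.part y → (y : ℕ) < j → (x : ℕ) < j

lemma isCut_of_le (q : Finpartition (univ : Finset (Fin L))) {j : ℕ} (hj : L ≤ j) :
    IsCut q j :=
  fun x _ _ _ => x.isLt.trans_le hj

lemma IsCut.comap_castSucc {q : Finpartition (univ : Finset (Fin (L + 1)))} {j : ℕ}
    (hq : IsCut q j) : IsCut (q.comap Fin.castSucc) j := fun x y hxy hy => by
  simpa using hq _ _ ((part_comap_eq_part_comap_iff _ _ _ _).1 hxy) (by simpa using hy)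

lemma reducible_iff_exists_isCut (q : Finpartition (univ : Finset (Fin L))) :
    Reducible q ↔ ∃ j, 1 ≤ j ∧ j < L ∧ IsCut q j := by
  constructor
  · rintro ⟨j, hj1, hjL, B, -, hBq, hB⟩
    refine ⟨j, hj1, hjL, fun x y hxy hy => ?_⟩
    have hyB : y ∈ B.sup id := by simp [hB, hy]
    obtain ⟨t, htB, hyt⟩ := mem_sup.1 hyB
    have hxB : x ∈ B.sup id := by
      rw [← q.part_eq_of_mem (hBq.1 htB) hyt, ← hxy] at htB
      exact mem_sup.2 ⟨_, htB, q.mem_part (mem_univ x)⟩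
    simpa [hB] using hxB
  · rintro ⟨j, hj1, hjL, hcut⟩
    have hL : 0 < L := by omega
    refine ⟨j, hj1, hjL, (univ.filter fun i : Fin L => (i : ℕ) < j).image q.part,
      ⟨q.part ⟨0, hL⟩, ?_⟩,
      Finset.ssubset_iff_subset_ne.2 ⟨?_, fun h => ?_⟩, ?_⟩
    · exact mem_image.2 ⟨⟨0, hL⟩, by simp; omega, rfl⟩
    · rw [parts_eq_image_part]
      exact image_subset_image (filter_subset _ _)
    · have hjmem : q.part ⟨j, hjL⟩ ∈ q.parts := q.part_mem.2 (mem_univ _)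
      obtain ⟨i, hi, hij⟩ := mem_image.1 (h ▸ hjmem)
      exact absurd (hcut _ i hij.symm (mem_filter.1 hi).2) (lt_irrefl j)
    · ext x
      simp only [sup_image, mem_sup, mem_filter, mem_univ, true_and]
      refine ⟨fun ⟨i, hi, hxi⟩ => hcut x i ((part_eq_part_iff_mem _ _ _).2 hxi) hi,
        fun hx => ⟨x, hx, q.mem_part (mem_univ x)⟩⟩

noncomputable def firstCut (R : Finpartition (univ : Finset (Fin L))) : ℕ :=
  sInf {j | 0 < j ∧ IsCut R j}

variable (R : Finpartition (univ : Finset (Fin L)))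

lemma firstCut_pos_and_isCut : 0 < firstCut R ∧ IsCut R (firstCut R) :=
  Nat.sInf_mem (s := {j | 0 < j ∧ IsCut R j}) ⟨L + 1, L.succ_pos, isCut_of_le R L.le_succ⟩

lemma firstCut_le {j : ℕ} (hj : 0 < j) (hR : IsCut R j) : firstCut R ≤ j :=
  Nat.sInf_le ⟨hj, hR⟩

lemma firstCut_eq_iff {h : ℕ} :
    firstCut R = h ↔ 0 < h ∧ IsCut R h ∧ ∀ j, 0 < j → j < h → ¬ IsCut R j := by
  refine ⟨?_, fun ⟨hh, hR, hmin⟩ => (firstCut_le R hh hR).antisymm ?_⟩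
  · rintro rfl
    exact ⟨(firstCut_pos_and_isCut R).1, (firstCut_pos_and_isCut R).2,
      fun j hj hlt hR => (firstCut_le R hj hR).not_gt hlt⟩
  · by_contra! hlt
    exact hmin _ (firstCut_pos_and_isCut R).1 hlt (firstCut_pos_and_isCut R).2

end Cut

lemma Fin.range_append {α : Type*} {m n : ℕ} (u : Fin m → α) (v : Fin n → α) :
    Set.range (Fin.append u v) = Set.range u ∪ Set.range v := by
  ext x
  constructor
  · rintro ⟨i, rfl⟩
    induction i using Fin.addCases <;> simp
  · rintro (⟨i, rfl⟩ | ⟨i, rfl⟩)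
    exacts [⟨Fin.castAdd n i, Fin.append_left u v i⟩, ⟨Fin.natAdd m i, Fin.append_right u v i⟩]

section Glue

variable {h j : ℕ}

/-- `Q` on the first `h` points, `P` on the next `j`, and the last point joins the block `c` of
`Q`. -/
def glue (Q : Finpartition (univ : Finset (Fin h))) (P : Finpartition (univ : Finset (Fin j)))
    (c : Finset (Fin h)) : Finpartition (univ : Finset (Fin (h + j + 1))) :=
  fibers (Fin.snoc (α := fun _ => Finset (Fin h) ⊕ Finset (Fin j))
    (Fin.append (Sum.inl ∘ Q.part) (Sum.inr ∘ P.part)) (Sum.inl c))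

variable (Q : Finpartition (univ : Finset (Fin h))) (P : Finpartition (univ : Finset (Fin j)))
  (c : Finset (Fin h))

lemma card_parts_glue (hc : c ∈ Q.parts) : #(glue Q P c).parts = #Q.parts + #P.parts := by
  have hdisj : Disjoint (Set.range (Sum.inl ∘ Q.part : Fin h → Finset (Fin h) ⊕ Finset (Fin j)))
      (Set.range (Sum.inr ∘ P.part)) :=
    Set.disjoint_left.2 fun _ ⟨_, ha⟩ ⟨_, hb⟩ => by simp [← ha] at hb
  obtain ⟨a, rfl⟩ := Q.part_surjOn hc |>.imp fun _ ha => ha.2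
  have hmem : (Sum.inl (Q.part a) : Finset (Fin h) ⊕ Finset (Fin j)) ∈
      Set.range (Sum.inl ∘ Q.part) ∪ Set.range (Sum.inr ∘ P.part) := Or.inl ⟨a, rfl⟩
  rw [glue, card_parts_fibers, Fin.range_snoc, Fin.range_append,
    Set.insert_eq_of_mem hmem, Nat.card_coe_set_eq,
    Set.ncard_union_eq hdisj, Set.range_comp, Set.range_comp,
    Set.ncard_image_of_injective _ Sum.inl_injective,
    Set.ncard_image_of_injective _ Sum.inr_injective, card_parts_eq_card_range,
    card_parts_eq_card_range, Nat.card_coe_set_eq, Nat.card_coe_set_eq]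

lemma isCut_comap_castSucc_glue_iff {i : ℕ} (hi : i ≤ h) :
    IsCut ((glue Q P c).comap Fin.castSucc) i ↔ IsCut Q i := by
  constructor
  · intro hcut a b hab hb
    simpa using hcut (Fin.castAdd j a) (Fin.castAdd j b) (by simp [glue, hab]) (by simpa using hb)
  · intro hcut x y hxy hy
    induction y using Fin.addCases with
    | right b => simp at hy; omega
    | left b =>
      induction x using Fin.addCases with
      | left a => simpa using hcut a b (by simpa [glue] using hxy) (by simpa using hy)
      | right a => simp [glue, -Fin.castSucc_natAdd] at hxy

lemma firstCut_comap_castSucc_glue_eq_iff (hh : 0 < h) :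
    firstCut ((glue Q P c).comap Fin.castSucc) = h ↔ ¬ Reducible Q := by
  rw [firstCut_eq_iff, reducible_iff_exists_isCut,
    isCut_comap_castSucc_glue_iff Q P c le_rfl]
  simp only [hh, isCut_of_le Q le_rfl, true_and, not_exists, not_and]
  exact forall₂_congr fun i _ => forall_congr' fun hi =>
    not_congr (isCut_comap_castSucc_glue_iff Q P c hi.le)

lemma not_reducible_glue (hc : c ∈ Q.parts) (hQ : ¬ Reducible Q) : ¬ Reducible (glue Q P c) := by
  rw [reducible_iff_exists_isCut]
  rintro ⟨i, hi1, hi, hcut⟩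
  rcases lt_or_ge i h with hih | hhi
  · exact hQ ((reducible_iff_exists_isCut Q).2
      ⟨i, hi1, hih, (isCut_comap_castSucc_glue_iff Q P c hih.le).1 hcut.comap_castSucc⟩)
  · obtain ⟨a, ha⟩ := Q.nonempty_of_mem_parts hc
    have := hcut (Fin.last _) (Fin.castAdd j a).castSucc
      (by simp [glue, Q.part_eq_of_mem hc ha]) (by simp; omega)
    simp at this
    omega

lemma part_glue_zero_eq_part_glue_last_iff (hh : 0 < h) :
    (glue Q P c).part 0 = (glue Q P c).part (Fin.last (h + j)) ↔ Q.part ⟨0, hh⟩ = c := by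
  have : (0 : Fin (h + j + 1)) = (Fin.castAdd j ⟨0, hh⟩).castSucc := rfl
  rw [this, glue, part_fibers_eq_part_fibers_iff, Fin.snoc_castSucc, Fin.snoc_last,
    Fin.append_left, Function.comp_apply, Sum.inl.injEq]

lemma glue_inj {Q' : Finpartition (univ : Finset (Fin h))}
    {P' : Finpartition (univ : Finset (Fin j))} {c' : Finset (Fin h)} (hc : c ∈ Q.parts)
    (hc' : c' ∈ Q'.parts) (hglue : glue Q P c = glue Q' P' c') : Q = Q' ∧ P = P' ∧ c = c' := by
  have H x y : (glue Q P c).part x = (glue Q P c).part y ↔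
      (glue Q' P' c').part x = (glue Q' P' c').part y := by
    rw [hglue]
  refine ⟨ext_of_part_eq_part_iff fun a b => ?_, ext_of_part_eq_part_iff fun a b => ?_, ?_⟩
  · simpa [glue] using H (Fin.castAdd j a).castSucc (Fin.castAdd j b).castSucc
  · simpa [glue, -Fin.castSucc_natAdd] using H (Fin.natAdd h a).castSucc (Fin.natAdd h b).castSucc
  · ext a
    rw [← Q.part_eq_iff_mem hc, ← Q'.part_eq_iff_mem hc']
    simpa [glue] using H (Fin.castAdd j a).castSucc (Fin.last _)

end Glue

section Split

variable {h j : ℕ} (q : Finpartition (univ : Finset (Fin (h + j + 1))))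

lemma exists_part_castAdd_eq_part_last (hq : ¬ Reducible q) (hh : 0 < h)
    (hcut : IsCut (q.comap Fin.castSucc) h) :
    ∃ a : Fin h, q.part (Fin.castAdd j a).castSucc = q.part (Fin.last (h + j)) := by
  by_contra! hne
  refine hq ((reducible_iff_exists_isCut q).2 ⟨h, hh, by omega, fun x y hxy hy => ?_⟩)
  induction y using Fin.lastCases with
  | last => simp at hy
  | cast y =>
    induction x using Fin.lastCases with
    | last => exact absurd hxy.symm (hne ⟨y, by simpa using hy⟩)
    | cast x => simpa using hcut x y (by simpa using hxy) (by simpa using hy)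

lemma exists_glue_eq (hcut : IsCut (q.comap Fin.castSucc) h) {a₀ : Fin h}
    (ha₀ : q.part (Fin.castAdd j a₀).castSucc = q.part (Fin.last (h + j))) :
    ∃ Q P c, c ∈ Q.parts ∧ glue Q P c = q := by
  set Q := q.comap fun a : Fin h => (Fin.castAdd j a).castSucc
  set P := q.comap fun b : Fin j => (Fin.natAdd h b).castSucc
  set c := univ.filter fun a : Fin h => q.part (Fin.castAdd j a).castSucc = q.part (Fin.last _)
  have hc : c = Q.part a₀ := by
    ext a
    rw [← part_eq_part_iff_mem]
    simp [c, Q, ha₀]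
  have part_eq_c a : Q.part a = c ↔ q.part (Fin.castAdd j a).castSucc = q.part (Fin.last _) := by
    simp [hc, Q, ha₀]
  have head_ne_tail a b :
      q.part (Fin.castAdd j a).castSucc ≠ q.part (Fin.natAdd h b).castSucc := by
    intro hab
    simpa using hcut (Fin.natAdd h b) (Fin.castAdd j a) (by simpa using hab.symm) (by simp)
  have tail_ne_last b : q.part (Fin.natAdd h b).castSucc ≠ q.part (Fin.last _) :=
    fun hb => head_ne_tail a₀ b (ha₀.trans hb.symm)
  refine ⟨Q, P, c, hc ▸ Q.part_mem.2 (mem_univ _), ext_of_part_eq_part_iff fun x y => ?_⟩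
  induction x using Fin.lastCases with
  | last =>
    induction y using Fin.lastCases with
    | last => simp
    | cast y =>
      induction y using Fin.addCases with
      | left b => simpa [glue, eq_comm] using part_eq_c b
      | right b => simpa [glue, -Fin.castSucc_natAdd] using (tail_ne_last b).symm
  | cast x =>
    induction x using Fin.addCases with
    | left a =>
      induction y using Fin.lastCases with
      | last => simpa [glue] using part_eq_c a
      | cast y =>
        induction y using Fin.addCases with
        | left b => simp [glue, Q]
        | right b => simpa [glue, -Fin.castSucc_natAdd] using head_ne_tail a b
    | right a =>
      induction y using Fin.lastCases with
      | last => simpa [glue, -Fin.castSucc_natAdd] using tail_ne_last a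
      | cast y =>
        induction y using Fin.addCases with
        | left b => simpa [glue, -Fin.castSucc_natAdd] using (head_ne_tail b a).symm
        | right b => simp [glue, -Fin.castSucc_natAdd, P]

end Split

lemma Finpartition.card_parts_ne_part {α : Type*} [Fintype α] [DecidableEq α]
    (Q : Finpartition (univ : Finset α)) (a : α) :
    Nat.card {t // t ∈ Q.parts ∧ t ≠ Q.part a} = #Q.parts - 1 := by
  rw [← card_erase_of_mem (Q.part_mem.2 (mem_univ a)), ← Nat.card_eq_finsetCard]
  exact Nat.card_congr (Equiv.subtypeEquivRight fun t => by rw [mem_erase, and_comm])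

lemma Nat.card_subtype_eq_sum_card_fiberwise {α : Type*} [Fintype α] {p : α → Prop} {f : α → ℕ}
    {s : Finset ℕ} (hf : ∀ x, p x → f x ∈ s) :
    Nat.card {x // p x} = ∑ i ∈ s, Nat.card {x // p x ∧ f x = i} := by
  classical
  simp only [Nat.card_eq_fintype_card, Fintype.card_subtype]
  rw [card_eq_sum_card_fiberwise fun x hx => hf x (mem_filter.1 hx).2]
  simp [filter_filter]

/-- `m` is the number of blocks of `P`, and `c` the block of `Q` receiving the last point. -/
def GlueData (n h j : ℕ) (hh : 0 < h) : Type :=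
  Σ m : Fin (n - 1), {P : Finpartition (univ : Finset (Fin j)) // #P.parts = m} ×
    Σ Q : {Q : Finpartition (univ : Finset (Fin h)) // #Q.parts = n - m ∧ ¬ Reducible Q},
      {c // c ∈ Q.1.parts ∧ c ≠ Q.1.part ⟨0, hh⟩}

lemma card_glueData (n h j : ℕ) (hh : 0 < h) :
    Nat.card (GlueData n h j hh) = ∑ m ∈ range (n - 1), S j m * I h (n - m) * (n - m - 1) := by
  classical
  rw [GlueData, Nat.card_sigma, ← Fin.sum_univ_eq_sum_range]
  refine Fintype.sum_congr _ _ fun m => ?_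
  rw [Nat.card_prod, Nat.card_sigma, mul_assoc]
  simp_rw [card_parts_ne_part]
  rw [Fintype.sum_congr _ (fun _ => n - m - 1) fun Q => by rw [Q.2.1], sum_const, card_univ,
    smul_eq_mul, ← Nat.card_eq_fintype_card]
  rfl

lemma card_irreducible_with_firstCut (n h j k : ℕ) (hh : 0 < h) (hk : h + j = k) :
    Nat.card {q : Finpartition (univ : Finset (Fin (k + 1))) // #q.parts = n ∧ ¬ Reducible q ∧
        q.part 0 ≠ q.part (Fin.last k) ∧ firstCut (q.comap Fin.castSucc) = h} =
      ∑ m ∈ range (n - 1), S j m * I h (n - m) * (n - m - 1) := by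
  subst hk
  rw [← card_glueData n h j hh]
  refine (Nat.card_eq_of_bijective
    (fun x : GlueData n h j hh => ⟨glue x.2.2.1.1 x.2.1.1 x.2.2.2.1, by
      obtain ⟨m, ⟨P, hP⟩, ⟨Q, hQn, hQ⟩, ⟨c, hc, hc0⟩⟩ := x
      refine ⟨?_, not_reducible_glue Q P c hc hQ,
        fun h0 => hc0 ((part_glue_zero_eq_part_glue_last_iff Q P c hh).1 h0).symm,
        (firstCut_comap_castSucc_glue_eq_iff Q P c hh).2 hQ⟩
      rw [card_parts_glue Q P c hc]
      omega⟩) ⟨?_, ?_⟩).symm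
  · rintro ⟨m, ⟨P, hP⟩, ⟨Q, _⟩, ⟨c, hc, _⟩⟩ ⟨m', ⟨P', hP'⟩, ⟨Q', _⟩, ⟨c', hc', _⟩⟩ hglue
    obtain ⟨rfl, rfl, rfl⟩ := glue_inj Q P c hc hc' (congrArg Subtype.val hglue)
    obtain rfl : m = m' := Fin.ext (hP.symm.trans hP')
    rfl
  · rintro ⟨q, hn, hirr, hsep, hfirst⟩
    have hcut := (firstCut_pos_and_isCut (q.comap Fin.castSucc)).2
    rw [hfirst] at hcut
    obtain ⟨a₀, ha₀⟩ := exists_part_castAdd_eq_part_last q hirr hh hcut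
    obtain ⟨Q, P, c, hc, rfl⟩ := exists_glue_eq q hcut ha₀
    have hQ := (firstCut_comap_castSucc_glue_eq_iff Q P c hh).1 hfirst
    have hc0 : c ≠ Q.part ⟨0, hh⟩ :=
      fun h0 => hsep ((part_glue_zero_eq_part_glue_last_iff Q P c hh).2 h0.symm)
    have hQ2 : 1 < #Q.parts := one_lt_card.2 ⟨c, hc, _, Q.part_mem.2 (mem_univ _), hc0⟩
    rw [card_parts_glue Q P c hc] at hn
    exact ⟨⟨⟨#P.parts, by omega⟩, ⟨P, rfl⟩, ⟨Q, by simp only; omega, hQ⟩, ⟨c, hc, hc0⟩⟩, rfl⟩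

/-- The number of irreducible `n`-partitions of `Fin ℓ` in which `0` and `ℓ-1` lie in
different blocks. -/
theorem card_irreducible_partitions_different_blocks (ℓ n : ℕ) (hℓ : 2 ≤ ℓ) :
    Nat.card {q : Finpartition (Finset.univ : Finset (Fin ℓ)) //
        q.parts.card = n ∧ ¬ Reducible q ∧
        ¬ ∃ c ∈ q.parts, (⟨0, by omega⟩ : Fin ℓ) ∈ c ∧ (⟨ℓ - 1, by omega⟩ : Fin ℓ) ∈ c}
      = ∑ j ∈ Finset.range (ℓ - 1), ∑ m ∈ Finset.range (n - 1),
          S j m * I (ℓ - j - 1) (n - m) * (n - m - 1) := by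
  obtain ⟨k, rfl⟩ : ∃ k, ℓ = k + 1 := ⟨ℓ - 1, by omega⟩
  have hsep (q : Finpartition (univ : Finset (Fin (k + 1)))) :
      (¬ ∃ c ∈ q.parts, (⟨0, by omega⟩ : Fin (k + 1)) ∈ c ∧
          (⟨k + 1 - 1, by omega⟩ : Fin (k + 1)) ∈ c) ↔ q.part 0 ≠ q.part (Fin.last k) := by
    rw [exists_mem_parts_mem_and_mem_iff]
    rfl
  have hfirst (q : Finpartition (univ : Finset (Fin (k + 1)))) :
      0 < firstCut (q.comap Fin.castSucc) ∧ firstCut (q.comap Fin.castSucc) ≤ k :=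
    ⟨(firstCut_pos_and_isCut _).1, firstCut_le _ (by omega) (isCut_of_le _ le_rfl)⟩
  rw [Nat.card_congr (Equiv.subtypeEquivRight fun q =>
      and_congr_right' (and_congr_right' (hsep q))),
    Nat.card_subtype_eq_sum_card_fiberwise (f := fun q => k - firstCut (q.comap Fin.castSucc))
      (s := range k) fun q _ => mem_range.2 (by have := hfirst q; omega),
    Nat.add_sub_cancel]
  refine sum_congr rfl fun j hj => ?_
  rw [mem_range] at hj
  rw [show k + 1 - j - 1 = k - j by omega, ← card_irreducible_with_firstCut n (k - j) j k (by omega) (by omega)]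
  refine Nat.card_congr (Equiv.subtypeEquivRight fun q => ?_)
  simp only [and_assoc]
  refine and_congr_right' (and_congr_right' (and_congr_right' ?_))
  have := hfirst q
  omega
end
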